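/- Energy identity for the linear part of the semi-discrete scheme: let (e^k)_{k≥0} ⊂ X_M satisfy δ_t² e^k := (e^{k+1} − 2e^k + e^{k−1})/τ² and define A^k = ‖δ_t⁺e^k‖² + (1/2)(‖e^k‖² + ‖e^{k+1}‖² + ‖δ_x⁺e^k‖² + ‖δ_x⁺e^{k+1}‖²) with δ_t⁺e^k = (e^{k+1} − e^k)/τ. If δ_t² e_j^k = (δ_x² − 1) (e_j^{k+1} + e_j^{k−1})/2 + R_j^k for j = 1,…,M−1 with e^k ∈ X_M, then A^k − A^{k−1} = (R^k, e^{k+1} − e^{k−1}) for all k ≥ 1. -/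

import Mathlib

/-
Test the scheme at time level k against w = e^{k+1} - e^{k-1}. Since
(e^{k+1} - 2e^k + e^{k-1}) w = (e^{k+1} - e^k)² - (e^k - e^{k-1})², the time difference
telescopes into the kinetic part of A^k - A^{k-1}; the zeroth-order term gives
(e^{k+1} + e^{k-1}) w = (e^{k+1})² - (e^{k-1})²; and summation by parts, using that w vanishes
at both ends, turns (δ_x²(e^{k+1} + e^{k-1}), w) into -(‖δ_x⁺e^{k+1}‖² - ‖δ_x⁺e^{k-1}‖²).
Only the source term (R^k, w) is left over.
-/

/-- ‖·‖² norm over interior points -/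
noncomputable def nrm2 (h : ℝ) (M : ℕ) (u : ℕ → ℝ) : ℝ := h * ∑ j ∈ Finset.Icc 1 (M - 1), u j ^ 2

/-- ‖δ_x⁺ ·‖² seminorm -/
noncomputable def nrmx2 (h : ℝ) (M : ℕ) (u : ℕ → ℝ) : ℝ :=
  h * ∑ j ∈ Finset.range M, ((u (j + 1) - u j) / h) ^ 2

/-- inner product over interior points -/
noncomputable def iprod (h : ℝ) (M : ℕ) (u v : ℕ → ℝ) : ℝ := h * ∑ j ∈ Finset.Icc 1 (M - 1), u j * v j

/-- discrete energy A^k -/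
noncomputable def energyA (h τ : ℝ) (M : ℕ) (e : ℕ → ℕ → ℝ) (k : ℕ) : ℝ :=
  nrm2 h M (fun j => (e (k + 1) j - e k j) / τ)
    + 1 / 2 * (nrm2 h M (e k) + nrm2 h M (e (k + 1))
        + nrmx2 h M (e k) + nrmx2 h M (e (k + 1)))

open Finset

noncomputable def discreteLaplacian (h : ℝ) (u : ℕ → ℝ) (j : ℕ) : ℝ :=
  (u (j + 1) - 2 * u j + u (j - 1)) / h ^ 2

noncomputable def gradInner (h : ℝ) (M : ℕ) (u v : ℕ → ℝ) : ℝ :=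
  h * ∑ j ∈ range M, (u (j + 1) - u j) / h * ((v (j + 1) - v j) / h)

theorem Finset.sum_Icc_one_pred_eq_sum_range {β : Type*} [AddCommMonoid β] (M : ℕ)
    {f : ℕ → β} (hf : f 0 = 0) : ∑ j ∈ Icc 1 (M - 1), f j = ∑ j ∈ range M, f j := by
  rw [← sum_erase (range M) hf]
  congr 1
  ext j
  simp only [mem_Icc, mem_erase, mem_range]
  omega

theorem sum_secondDiff_mul_eq_neg {R : Type*} [CommRing R] (M : ℕ) (u v : ℕ → R)
    (hv0 : v 0 = 0) (hvM : v M = 0) :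
    ∑ j ∈ Icc 1 (M - 1), (u (j + 1) - 2 * u j + u (j - 1)) * v j
      = -∑ j ∈ range M, (u (j + 1) - u j) * (v (j + 1) - v j) := by
  rw [sum_Icc_one_pred_eq_sum_range M (by simp [hv0]), eq_neg_iff_add_eq_zero,
    ← sum_add_distrib]
  have htel := sum_range_sub (fun j => (u j - u (j - 1)) * v j) M
  simp only [Nat.add_sub_cancel, hvM, mul_zero, zero_tsub, sub_self, zero_mul]
    at htel
  rw [← htel]
  refine sum_congr rfl fun j _ => ?_
  ring

theorem iprod_discreteLaplacian (h : ℝ) (M : ℕ) (u v : ℕ → ℝ) (hv0 : v 0 = 0)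
    (hvM : v M = 0) : iprod h M (discreteLaplacian h u) v = -gradInner h M u v := by
  have hsbp := sum_secondDiff_mul_eq_neg M u v hv0 hvM
  simp only [gradInner, div_mul_div_comm, ← sq]
  simp only [iprod, discreteLaplacian, div_mul_eq_mul_div, ← sum_div, hsbp]
  ring

theorem nrm2_sub_nrm2_eq_iprod (h : ℝ) (M : ℕ) {u v p q : ℕ → ℝ}
    (hpq : ∀ j ∈ Icc 1 (M - 1), u j ^ 2 - v j ^ 2 = p j * q j) :
    nrm2 h M u - nrm2 h M v = iprod h M p q := by
  rw [nrm2, nrm2, iprod, ← mul_sub, ← sum_sub_distrib, sum_congr rfl hpq]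

theorem nrmx2_sub_nrmx2_eq_gradInner (h : ℝ) (M : ℕ) (u v : ℕ → ℝ) :
    nrmx2 h M u - nrmx2 h M v = gradInner h M (fun j => u j + v j) (fun j => u j - v j) := by
  rw [nrmx2, nrmx2, gradInner, ← mul_sub, ← sum_sub_distrib]
  congr 1
  refine sum_congr rfl fun j _ => ?_
  ring

theorem energyA_succ_sub (h τ : ℝ) (M : ℕ) (e : ℕ → ℕ → ℝ) (n : ℕ) :
    energyA h τ M e (n + 1) - energyA h τ M e n
      = (nrm2 h M (fun j => (e (n + 2) j - e (n + 1) j) / τ)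
          - nrm2 h M (fun j => (e (n + 1) j - e n j) / τ))
        + (nrm2 h M (e (n + 2)) - nrm2 h M (e n)) / 2
        + (nrmx2 h M (e (n + 2)) - nrmx2 h M (e n)) / 2 := by
  rw [energyA, energyA]
  ring

theorem stmt_18_general (M : ℕ) (h τ : ℝ)
    (e R : ℕ → ℕ → ℝ)
    (hbc : ∀ k, e k 0 = 0 ∧ e k M = 0)
    (hscheme : ∀ k ≥ 1, ∀ j ∈ Finset.Icc 1 (M - 1),
      (e (k + 1) j - 2 * e k j + e (k - 1) j) / τ ^ 2
        = ((e (k + 1) (j + 1) - 2 * e (k + 1) j + e (k + 1) (j - 1)) / h ^ 2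
              + (e (k - 1) (j + 1) - 2 * e (k - 1) j + e (k - 1) (j - 1)) / h ^ 2) / 2
          - (e (k + 1) j + e (k - 1) j) / 2 + R k j) :
    ∀ k ≥ 1, energyA h τ M e k - energyA h τ M e (k - 1)
      = iprod h M (R k) (fun j => e (k + 1) j - e (k - 1) j) := by
  intro k hk
  obtain ⟨n, rfl⟩ : ∃ n, k = n + 1 := ⟨k - 1, by omega⟩
  set a := e n
  set b := e (n + 1)
  set c := e (n + 1 + 1)
  set w : ℕ → ℝ := fun j => c j - a j
  have htested : iprod h M (fun j => (c j - 2 * b j + a j) / τ ^ 2) w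
      = iprod h M (discreteLaplacian h fun j => c j + a j) w / 2
        - iprod h M (fun j => c j + a j) w / 2 + iprod h M (R (n + 1)) w := by
    have hpointwise : ∀ j ∈ Icc 1 (M - 1), (c j - 2 * b j + a j) / τ ^ 2 * w j
        = discreteLaplacian h (fun j => c j + a j) j * w j / 2
          - (c j + a j) * w j / 2 + R (n + 1) j * w j := fun j hj => by
      have hs := hscheme (n + 1) (by omega) j hj
      simp only [Nat.add_sub_cancel] at hs
      unfold discreteLaplacian
      linear_combination w j * hs
    simp only [iprod, sum_congr rfl hpointwise, sum_add_distrib, sum_sub_distrib, ← sum_div]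
    ring
  have hkinetic : nrm2 h M (fun j => (c j - b j) / τ) - nrm2 h M (fun j => (b j - a j) / τ)
      = iprod h M (fun j => (c j - 2 * b j + a j) / τ ^ 2) w :=
    nrm2_sub_nrm2_eq_iprod h M fun j _ => by ring
  have hmass : nrm2 h M c - nrm2 h M a = iprod h M (fun j => c j + a j) w :=
    nrm2_sub_nrm2_eq_iprod h M fun j _ => by ring
  have hstiff : nrmx2 h M c - nrmx2 h M a
      = -iprod h M (discreteLaplacian h fun j => c j + a j) w := by
    rw [nrmx2_sub_nrmx2_eq_gradInner, iprod_discreteLaplacian, neg_neg]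
    all_goals simp [w, a, c, hbc]
  rw [Nat.add_sub_cancel, energyA_succ_sub, hkinetic, hmass, hstiff, htested]
  ring

theorem stmt_18 (M : ℕ) (hM : 2 ≤ M) (h τ : ℝ) (hh : 0 < h) (hτ : 0 < τ)
    (e R : ℕ → ℕ → ℝ)
    (hbc : ∀ k, e k 0 = 0 ∧ e k M = 0)
    (hRbc : ∀ k, R k 0 = 0 ∧ R k M = 0)
    (hscheme : ∀ k ≥ 1, ∀ j ∈ Finset.Icc 1 (M - 1),
      (e (k + 1) j - 2 * e k j + e (k - 1) j) / τ ^ 2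
        = ((e (k + 1) (j + 1) - 2 * e (k + 1) j + e (k + 1) (j - 1)) / h ^ 2
              + (e (k - 1) (j + 1) - 2 * e (k - 1) j + e (k - 1) (j - 1)) / h ^ 2) / 2
          - (e (k + 1) j + e (k - 1) j) / 2 + R k j) :
    ∀ k ≥ 1, energyA h τ M e k - energyA h τ M e (k - 1)
      = iprod h M (R k) (fun j => e (k + 1) j - e (k - 1) j) :=
  stmt_18_general M h τ e R hbc hscheme
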